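/- arXiv:2210.06088 — 3 statements merged into one kernel-verified Lean document; each statement's English description precedes it below -/
import Mathlib

section
/- For w, v ∈ ℝ^d, one has f(w,v) = 0 if and only if w = 0, or v = 0, or w and v are antiparallel (i.e., w, v ≠ 0 and θ_{w,v} = π, equivalently ⟨w,v⟩ = −‖w‖‖v‖). -/
open MeasureTheory ProbabilityTheory

/-- The ReLU function. -/
noncomputable def relu (z : ℝ) : ℝ := max z 0

/-- The standard Gaussian probability measure on `ℝ^d`. -/
noncomputable def stdGaussian (d : ℕ) : Measure (Fin d → ℝ) :=
  Measure.pi fun _ => gaussianReal 0 1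

/-- Euclidean inner product on `ℝ^d`. -/
noncomputable def dot {d : ℕ} (w v : Fin d → ℝ) : ℝ := ∑ j, w j * v j

/-- Euclidean norm on `ℝ^d`. -/
noncomputable def vnorm {d : ℕ} (w : Fin d → ℝ) : ℝ := Real.sqrt (∑ j, w j ^ 2)

/-- The Gaussian ReLU correlation `f(w,v) = ∫ σ(⟨w,x⟩) σ(⟨v,x⟩) dγ_d(x)`. -/
noncomputable def gaussCorr (d : ℕ) (w v : Fin d → ℝ) : ℝ :=
  ∫ x, relu (dot w x) * relu (dot v x) ∂(stdGaussian d)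

/-- The angle between two (nonzero) vectors in `ℝ^d`. -/
noncomputable def angle {d : ℕ} (w v : Fin d → ℝ) : ℝ :=
  Real.arccos (dot w v / (vnorm w * vnorm v))

section Aux

open Real Set
open scoped NNReal

variable {d : ℕ}

lemma relu_nonneg (z : ℝ) : 0 ≤ relu z := le_max_right _ _

lemma relu_le_abs (z : ℝ) : relu z ≤ |z| := max_le (le_abs_self z) (abs_nonneg z)

lemma relu_of_nonpos {z : ℝ} (h : z ≤ 0) : relu z = 0 := max_eq_right h

lemma relu_pos {z : ℝ} (h : 0 < z) : 0 < relu z := lt_max_iff.2 (Or.inl h)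

lemma vnorm_nonneg (w : Fin d → ℝ) : 0 ≤ vnorm w := Real.sqrt_nonneg _

lemma vnorm_sq (w : Fin d → ℝ) : vnorm w ^ 2 = ∑ j, w j ^ 2 :=
  Real.sq_sqrt (Finset.sum_nonneg fun _ _ => sq_nonneg _)

lemma vnorm_pos (w : Fin d → ℝ) (hw : w ≠ 0) : 0 < vnorm w := by
  rcases Function.ne_iff.1 hw with ⟨j, hj⟩
  have hj' : w j ≠ 0 := by simpa using hj
  apply Real.sqrt_pos.2
  have h0 : 0 < w j ^ 2 := by positivity
  exact lt_of_lt_of_le h0 (Finset.single_le_sum (fun i _ => sq_nonneg (w i)) (Finset.mem_univ j))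

lemma dot_comm (w v : Fin d → ℝ) : dot w v = dot v w := by
  unfold dot; exact Finset.sum_congr rfl fun j _ => mul_comm _ _

lemma dot_sq_le (w v : Fin d → ℝ) : (dot w v) ^ 2 ≤ (∑ j, w j ^ 2) * ∑ j, v j ^ 2 :=
  Finset.sum_mul_sq_le_sq_mul_sq Finset.univ w v

lemma abs_dot_le (w v : Fin d → ℝ) : |dot w v| ≤ vnorm w * vnorm v := by
  have h : (dot w v) ^ 2 ≤ (vnorm w * vnorm v) ^ 2 := by
    rw [mul_pow, vnorm_sq, vnorm_sq]; exact dot_sq_le w v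
  calc |dot w v| = Real.sqrt ((dot w v) ^ 2) := (Real.sqrt_sq_eq_abs _).symm
    _ ≤ Real.sqrt ((vnorm w * vnorm v) ^ 2) := Real.sqrt_le_sqrt h
    _ = vnorm w * vnorm v := Real.sqrt_sq (mul_nonneg (vnorm_nonneg _) (vnorm_nonneg _))

lemma vnorm_eq_norm (w : Fin d → ℝ) :
    vnorm w = ‖(WithLp.equiv 2 (Fin d → ℝ)).symm w‖ := by
  rw [EuclideanSpace.norm_eq]
  unfold vnorm
  congr 1
  exact Finset.sum_congr rfl fun j _ => by
    rw [WithLp.equiv_symm_apply, PiLp.toLp_apply, Real.norm_eq_abs, sq_abs]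

lemma dot_eq_inner (w v : Fin d → ℝ) :
    dot w v = (inner ℝ ((WithLp.equiv 2 (Fin d → ℝ)).symm w)
      ((WithLp.equiv 2 (Fin d → ℝ)).symm v) : ℝ) := by
  rw [PiLp.inner_apply]
  exact Finset.sum_congr rfl fun j _ => by
    rw [WithLp.equiv_symm_apply, PiLp.toLp_apply, PiLp.toLp_apply, RCLike.inner_apply,
      starRingEnd_apply, star_trivial, mul_comm]

lemma antiparallel_key {w v : Fin d → ℝ} (h : dot w v = -(vnorm w * vnorm v)) :
    ∀ j, vnorm v * w j = vnorm w * -(v j) := by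
  have hinner : (inner ℝ ((WithLp.equiv 2 (Fin d → ℝ)).symm w)
      (-((WithLp.equiv 2 (Fin d → ℝ)).symm v)) : ℝ)
      = ‖(WithLp.equiv 2 (Fin d → ℝ)).symm w‖ * ‖-((WithLp.equiv 2 (Fin d → ℝ)).symm v)‖ := by
    rw [inner_neg_right, norm_neg, ← vnorm_eq_norm w, ← vnorm_eq_norm v, ← dot_eq_inner, h]
    ring
  have heq := inner_eq_norm_mul_iff_real.mp hinner
  intro j
  have hj := congrArg (fun z : EuclideanSpace ℝ (Fin d) => z j) heq
  simp only [norm_neg, PiLp.smul_apply, PiLp.neg_apply, smul_eq_mul] at hj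
  have hWj : ((WithLp.equiv 2 (Fin d → ℝ)).symm w) j = w j := rfl
  have hVj : ((WithLp.equiv 2 (Fin d → ℝ)).symm v) j = v j := rfl
  rw [hWj, hVj] at hj
  rw [vnorm_eq_norm w, vnorm_eq_norm v]
  simpa using hj

instance stdGaussian_isProbability (d : ℕ) : IsProbabilityMeasure (stdGaussian d) := by
  unfold _root_.stdGaussian; infer_instance

lemma measurePreserving_eval_gauss (d : ℕ) (j : Fin d) :
    MeasurePreserving (fun x : Fin d → ℝ => x j) (stdGaussian d) (gaussianReal 0 1) := by
  refine ⟨measurable_pi_apply j, ?_⟩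
  ext s hs
  rw [Measure.map_apply (measurable_pi_apply j) hs]
  have hpre : (fun x : Fin d → ℝ => x j) ⁻¹' s
      = Set.pi Set.univ (Function.update (fun _ : Fin d => (Set.univ : Set ℝ)) j s) :=
    Set.eval_preimage
  rw [_root_.stdGaussian, hpre, Measure.pi_pi]
  rw [Finset.prod_eq_single j (fun b _ hb => by simp [Function.update_of_ne hb])
    (by simp)]
  simp

lemma integrable_sq_gaussian : Integrable (fun t : ℝ => t ^ 2) (gaussianReal 0 1) := by
  rw [gaussianReal_of_var_ne_zero 0 one_ne_zero,
    integrable_withDensity_iff (measurable_gaussianPDF 0 1)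
      (Filter.Eventually.of_forall fun x => ENNReal.ofReal_lt_top)]
  have h : Integrable (fun x : ℝ => x ^ (2 : ℝ) * Real.exp (-(1/2) * x ^ 2)) :=
    integrable_rpow_mul_exp_neg_mul_sq (b := 1/2) (s := 2)
      (by norm_num) (by norm_num)
  simp_rw [Real.rpow_two] at h
  refine (h.const_mul ((Real.sqrt (2 * Real.pi * (1:ℝ≥0)))⁻¹)).congr ?_
  refine Filter.Eventually.of_forall fun x => ?_
  simp only [gaussianPDF_def]
  rw [ENNReal.toReal_ofReal (gaussianPDFReal_nonneg 0 1 x)]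
  unfold gaussianPDFReal
  rw [show -(x - 0) ^ 2 / (2 * ((1:ℝ≥0):ℝ)) = -(1/2) * x ^ 2 by push_cast; ring]
  ring

lemma integrable_sq_coord (d : ℕ) (j : Fin d) :
    Integrable (fun x : Fin d → ℝ => (x j) ^ 2) (stdGaussian d) :=
  ((measurePreserving_eval_gauss d j).integrable_comp
    (measurable_id.pow_const 2).aestronglyMeasurable).mpr integrable_sq_gaussian

lemma continuous_dot (w : Fin d → ℝ) : Continuous fun x : Fin d → ℝ => dot w x := by
  unfold dot
  exact continuous_finset_sum _ fun j _ => continuous_const.mul (continuous_apply j)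

lemma continuous_relu : Continuous relu := continuous_id.max continuous_const

lemma integrable_integrand (d : ℕ) (w v : Fin d → ℝ) :
    Integrable (fun x => relu (dot w x) * relu (dot v x)) (stdGaussian d) := by
  have hmeas : AEStronglyMeasurable (fun x : Fin d → ℝ => relu (dot w x) * relu (dot v x))
      (stdGaussian d) :=
    ((continuous_relu.comp (continuous_dot w)).mul
      (continuous_relu.comp (continuous_dot v))).aestronglyMeasurable
  have hmaj : Integrable
      (fun x : Fin d → ℝ => ((∑ j, w j ^ 2) + (∑ j, v j ^ 2)) * ∑ j, (x j) ^ 2)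
      (stdGaussian d) :=
    (integrable_finset_sum _ fun j _ => integrable_sq_coord d j).const_mul _
  refine hmaj.mono' hmeas (Filter.Eventually.of_forall fun x => ?_)
  have hxw := dot_sq_le w x
  have hxv := dot_sq_le v x
  have h1 : relu (dot w x) ≤ |dot w x| := relu_le_abs _
  have h2 : relu (dot v x) ≤ |dot v x| := relu_le_abs _
  have h3 : 0 ≤ relu (dot w x) := relu_nonneg _
  have h4 : 0 ≤ relu (dot v x) := relu_nonneg _
  rw [Real.norm_eq_abs, abs_of_nonneg (mul_nonneg h3 h4)]
  have h5 : relu (dot w x) * relu (dot v x) ≤ |dot w x| * |dot v x| :=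
    mul_le_mul h1 h2 h4 (abs_nonneg _)
  have h6 : |dot w x| * |dot v x| ≤ (dot w x) ^ 2 + (dot v x) ^ 2 := by
    nlinarith [sq_nonneg (|dot w x| - |dot v x|), sq_abs (dot w x), sq_abs (dot v x)]
  have h7 : (0:ℝ) ≤ ∑ j, (x j) ^ 2 := Finset.sum_nonneg fun _ _ => sq_nonneg _
  nlinarith [h5, h6, hxw, hxv]

instance gaussianReal_isOpenPosMeasure : (gaussianReal 0 1).IsOpenPosMeasure := by
  constructor
  intro U hU hne h0
  rw [gaussianReal_of_var_ne_zero 0 one_ne_zero,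
    withDensity_apply_eq_zero (measurable_gaussianPDF 0 1)] at h0
  have : {x : ℝ | gaussianPDF 0 1 x ≠ 0} = Set.univ := by
    ext x; simp [(gaussianPDF_pos 0 one_ne_zero x).ne']
  rw [this, Set.univ_inter] at h0
  exact (hU.measure_pos volume hne).ne' h0

instance stdGaussian_isOpenPosMeasure (d : ℕ) : (stdGaussian d).IsOpenPosMeasure := by
  unfold _root_.stdGaussian; infer_instance

lemma gaussCorr_pos {w v : Fin d → ℝ} (hw : w ≠ 0) (hv : v ≠ 0)
    (hne : dot w v ≠ -(vnorm w * vnorm v)) : 0 < gaussCorr d w v := by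
  have hCS : -(vnorm w * vnorm v) ≤ dot w v := neg_le_of_neg_le (by
    have := abs_dot_le w v
    have := neg_abs_le (dot w v)
    linarith)
  have hgt : -(vnorm w * vnorm v) < dot w v := lt_of_le_of_ne hCS (Ne.symm hne)
  have hpw : 0 < vnorm w := vnorm_pos w hw
  have hpv : 0 < vnorm v := vnorm_pos v hv
  set x₀ : Fin d → ℝ := fun j => w j / vnorm w + v j / vnorm v with hx₀
  have hsum : ∀ (u z : Fin d → ℝ) (a : ℝ), ∑ j, u j * (z j / a) = (∑ j, u j * z j) / a := by
    intro u z a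
    rw [Finset.sum_div]
    exact Finset.sum_congr rfl fun j _ => by ring
  have hself : ∀ u : Fin d → ℝ, dot u u = vnorm u ^ 2 := by
    intro u
    rw [vnorm_sq]
    exact Finset.sum_congr rfl fun j _ => (sq (u j)).symm
  have hsplit : ∀ u : Fin d → ℝ, dot u x₀ = dot u w / vnorm w + dot u v / vnorm v := by
    intro u
    unfold dot
    simp only [hx₀, mul_add]
    rw [Finset.sum_add_distrib, hsum u w (vnorm w), hsum u v (vnorm v)]
  have hdw : dot w x₀ = vnorm w + dot w v / vnorm v := by
    rw [hsplit w, hself w, sq, mul_div_assoc, div_self hpw.ne', mul_one]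
  have hdv : dot v x₀ = dot w v / vnorm w + vnorm v := by
    rw [hsplit v, hself v, sq, mul_div_assoc, div_self hpv.ne', mul_one, dot_comm v w]
  have hx₀w : 0 < dot w x₀ := by
    rw [hdw]
    have : -(vnorm w) < dot w v / vnorm v := by
      rw [lt_div_iff₀ hpv]; nlinarith
    linarith
  have hx₀v : 0 < dot v x₀ := by
    rw [hdv]
    have : -(vnorm v) < dot w v / vnorm w := by
      rw [lt_div_iff₀ hpw]; nlinarith
    linarith
  have hUopen : IsOpen {x : Fin d → ℝ | 0 < dot w x ∧ 0 < dot v x} :=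
    (isOpen_lt continuous_const (continuous_dot w)).inter
      (isOpen_lt continuous_const (continuous_dot v))
  have hUsub : {x : Fin d → ℝ | 0 < dot w x ∧ 0 < dot v x} ⊆
      Function.support fun x => relu (dot w x) * relu (dot v x) := by
    intro x hx
    exact (mul_pos (relu_pos hx.1) (relu_pos hx.2)).ne'
  rw [gaussCorr]
  rw [integral_pos_iff_support_of_nonneg
    (fun x => mul_nonneg (relu_nonneg _) (relu_nonneg _)) (integrable_integrand d w v)]
  exact lt_of_lt_of_le (hUopen.measure_pos (stdGaussian d) ⟨x₀, hx₀w, hx₀v⟩)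
    (measure_mono hUsub)

end Aux

/-- `f(w,v) = 0` iff `w = 0`, or `v = 0`, or `w` and `v` are antiparallel. -/
theorem gaussCorr_eq_zero_iff (d : ℕ) (w v : Fin d → ℝ) :
    gaussCorr d w v = 0 ↔
      w = 0 ∨ v = 0 ∨ (w ≠ 0 ∧ v ≠ 0 ∧ dot w v = -(vnorm w * vnorm v)) := by
  constructor
  · intro h0
    by_cases hw : w = 0
    · exact Or.inl hw
    by_cases hv : v = 0
    · exact Or.inr (Or.inl hv)
    refine Or.inr (Or.inr ⟨hw, hv, ?_⟩)
    by_contra hne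
    exact absurd h0 (gaussCorr_pos hw hv hne).ne'
  · rintro (rfl | rfl | ⟨hw, hv, heq⟩)
    · have : ∀ x : Fin d → ℝ, relu (dot 0 x) * relu (dot 0 x) = 0 := by
        intro x; simp [dot, relu]
      simp only [gaussCorr]
      rw [show (fun x => relu (dot (0 : Fin d → ℝ) x) * relu (dot v x)) = fun _ => (0:ℝ) by
        funext x; simp [dot, relu]]
      exact integral_zero _ _
    · simp only [gaussCorr]
      rw [show (fun x => relu (dot w x) * relu (dot (0 : Fin d → ℝ) x)) = fun _ => (0:ℝ) by
        funext x; simp [dot, relu]]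
      exact integral_zero _ _
    · have hpw : 0 < vnorm w := vnorm_pos w hw
      have key := antiparallel_key heq
      have hdvx : ∀ x, dot v x = -(vnorm v / vnorm w) * dot w x := by
        intro x
        have hvj : ∀ j, v j = -(vnorm v / vnorm w) * w j := by
          intro j
          have := key j
          field_simp
          linarith [key j]
        unfold dot
        rw [Finset.mul_sum]
        exact Finset.sum_congr rfl fun j _ => by rw [hvj j]; ring
      have hz : (fun x => relu (dot w x) * relu (dot v x)) = fun _ => (0:ℝ) := by
        funext x
        rcases le_or_gt (dot w x) 0 with h | h
        · rw [relu_of_nonpos h, zero_mul]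
        · have hc : 0 ≤ vnorm v / vnorm w := div_nonneg (vnorm_nonneg v) hpw.le
          have : dot v x ≤ 0 := by rw [hdvx x]; nlinarith
          rw [relu_of_nonpos this, mul_zero]
      simp only [gaussCorr]
      rw [hz]
      exact integral_zero _ _
end

section
/- Let G be a finite group acting linearly on a finite-dimensional real inner product space E by orthogonal transformations, and let f : E → ℝ be G-invariant, i.e. f(g·x) = f(x) for all g ∈ G and x ∈ E. Let E^G = { x ∈ E : g·x = x for all g ∈ G } be the fixed-point subspace. If f is Fréchet differentiable at a point x₀ ∈ E^G, then the gradient ∇f(x₀) lies in E^G; in particular, ∇f(x₀) = 0 if and only if the derivative at x₀ of the restriction of f to E^G vanishes. -/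
/-- The fixed-point subspace `E^G` of an orthogonal `G`-action on `E`. -/
def fixedSubmodule {G : Type*} [Group G] {E : Type*} [NormedAddCommGroup E]
    [InnerProductSpace ℝ E] (ρ : G →* (E ≃ₗᵢ[ℝ] E)) : Submodule ℝ E where
  carrier := {x | ∀ g, ρ g x = x}
  add_mem' := by
    intro a b ha hb g
    simp [map_add, ha g, hb g]
  zero_mem' := by
    intro g
    simp
  smul_mem' := by
    intro c a ha g
    simp [map_smul, ha g]

/-- For a `G`-invariant function `f` on a finite-dimensional real inner product space
with `G` acting orthogonally, the gradient at a fixed point `x₀ ∈ E^G` lies in `E^G`;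
in particular `∇f(x₀) = 0` iff the derivative at `x₀` of the restriction of `f` to
`E^G` vanishes. -/
theorem stmt18 {G : Type*} [Group G] [Finite G] {E : Type*} [NormedAddCommGroup E]
    [InnerProductSpace ℝ E] [FiniteDimensional ℝ E]
    (ρ : G →* (E ≃ₗᵢ[ℝ] E)) (f : E → ℝ)
    (hinv : ∀ g x, f (ρ g x) = f x)
    (x₀ : E) (hx₀ : x₀ ∈ fixedSubmodule ρ)
    (hf : DifferentiableAt ℝ f x₀) :
    gradient f x₀ ∈ fixedSubmodule ρ ∧
      (gradient f x₀ = 0 ↔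
        fderiv ℝ (fun y : fixedSubmodule ρ => f y) (⟨x₀, hx₀⟩ : fixedSubmodule ρ) = 0) := by
  -- the derivative is invariant under precomposition by `ρ g`
  have key : ∀ (g : G) (v : E), fderiv ℝ f x₀ (ρ g v) = fderiv ℝ f x₀ v := by
    intro g v
    set L : E →L[ℝ] E := ((ρ g).toContinuousLinearEquiv : E →L[ℝ] E) with hLdef
    have hLx : L x₀ = x₀ := by simpa [hLdef] using hx₀ g
    have hfun : (f ∘ fun x => L x) = f := by
      funext x
      simpa [hLdef] using hinv g x
    have hcomp : fderiv ℝ (f ∘ fun x => L x) x₀ =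
        (fderiv ℝ f (L x₀)).comp (fderiv ℝ (fun x : E => L x) x₀) := by
      apply fderiv_comp
      · rw [hLx]; exact hf
      · exact L.differentiableAt
    rw [hfun, hLx, L.fderiv] at hcomp
    conv_rhs => rw [hcomp]
    simp [hLdef]
  -- inner product formula for the gradient
  have hinner : ∀ v : E, (inner ℝ (gradient f x₀) v : ℝ) = fderiv ℝ f x₀ v := by
    intro v
    show inner ℝ ((InnerProductSpace.toDual ℝ E).symm (fderiv ℝ f x₀)) v = _
    exact InnerProductSpace.toDual_symm_apply
  -- the gradient is fixed
  have hmem : gradient f x₀ ∈ fixedSubmodule ρ := by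
    intro g
    apply ext_inner_right ℝ
    intro v
    have h1 : (inner ℝ (ρ g (gradient f x₀)) v : ℝ) = inner ℝ (gradient f x₀) (ρ g⁻¹ v) := by
      have := (ρ g⁻¹).inner_map_map (ρ g (gradient f x₀)) v
      rw [← this]
      congr 1
      have : ρ g⁻¹ (ρ g (gradient f x₀)) = ρ (g⁻¹ * g) (gradient f x₀) := by
        simp [map_mul]
      simpa using this
    rw [h1, hinner, hinner, key]
  refine ⟨hmem, ?_⟩
  set S := fixedSubmodule ρ
  have hrest : fderiv ℝ (fun y : S => f y) (⟨x₀, hx₀⟩ : S) =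
      (fderiv ℝ f x₀).comp S.subtypeL := by
    have heq : (fun y : S => f y) = f ∘ fun y : S => S.subtypeL y := rfl
    rw [heq]
    have hcomp : fderiv ℝ (f ∘ fun y : S => S.subtypeL y) (⟨x₀, hx₀⟩ : S) =
        (fderiv ℝ f (S.subtypeL (⟨x₀, hx₀⟩ : S))).comp
          (fderiv ℝ (fun y : S => S.subtypeL y) (⟨x₀, hx₀⟩ : S)) := by
      apply fderiv_comp
      · exact hf
      · exact S.subtypeL.differentiableAt
    rw [hcomp, S.subtypeL.fderiv]
    rfl
  constructor
  · intro h0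
    have hD : fderiv ℝ f x₀ = 0 := by
      have : fderiv ℝ f x₀ = InnerProductSpace.toDual ℝ E (gradient f x₀) := by
        show _ = InnerProductSpace.toDual ℝ E
          ((InnerProductSpace.toDual ℝ E).symm (fderiv ℝ f x₀))
        simp
      rw [this, h0, map_zero]
    rw [hrest, hD]
    ext v
    simp
  · intro h0
    have hz : fderiv ℝ f x₀ (gradient f x₀) = 0 := by
      have h := ContinuousLinearMap.ext_iff.mp (hrest.symm.trans h0)
        (⟨gradient f x₀, hmem⟩ : S)
      simpa using h
    have : (inner ℝ (gradient f x₀) (gradient f x₀) : ℝ) = 0 := by rw [hinner, hz]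
    exact inner_self_eq_zero.mp this
end

section
/- The function h : ℝ → ℝ defined by h(x) = (x/π) · arccos( 1 / (2·√(x² + 1/4)) ) − x/2 is injective (indeed strictly decreasing) on ℝ, and h(0) = 0. -/
/-- The function `h(x) = (x/π) · arccos(1/(2√(x² + 1/4))) − x/2`. -/
noncomputable def hfun (x : ℝ) : ℝ :=
  (x / Real.pi) * Real.arccos (1 / (2 * Real.sqrt (x ^ 2 + 1 / 4))) - x / 2

lemma arccos_eq_arctan (x : ℝ) :
    Real.arccos (1 / (2 * Real.sqrt (x ^ 2 + 1 / 4))) = Real.arctan (2 * |x|) := by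
  have h1 : Real.sqrt (1 + (2 * |x|) ^ 2) = 2 * Real.sqrt (x ^ 2 + 1 / 4) := by
    have : (1 : ℝ) + (2 * |x|) ^ 2 = 2 ^ 2 * (x ^ 2 + 1 / 4) := by
      rw [mul_pow, sq_abs]; ring
    rw [this, Real.sqrt_mul (by positivity), Real.sqrt_sq (by norm_num)]
  rw [← h1, ← Real.cos_arctan, Real.arccos_cos]
  · rw [← Real.arctan_zero]
    exact Real.arctan_strictMono.monotone (by positivity)
  · have := Real.arctan_lt_pi_div_two (2 * |x|)
    have := Real.pi_pos
    linarith

lemma hfun_eq (x : ℝ) : hfun x = x * Real.arctan (2 * |x|) / Real.pi - x / 2 := by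
  rw [hfun, arccos_eq_arctan]; ring

lemma hfun_odd (x : ℝ) : hfun (-x) = -hfun x := by
  rw [hfun_eq, hfun_eq, abs_neg]; ring

/-- arctan lower bound: `t/(1+t²) < arctan t` for `t > 0`. -/
lemma arctan_gt (t : ℝ) (ht : 0 < t) : t / (1 + t ^ 2) < Real.arctan t := by
  set f : ℝ → ℝ := fun t => Real.arctan t - t / (1 + t ^ 2) with hf
  have hde : ∀ s : ℝ, HasDerivAt f
      (1 / (1 + s ^ 2) - ((1 + s ^ 2) - s * (2 * s)) / (1 + s ^ 2) ^ 2) s := by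
    intro s
    have h1 : HasDerivAt (fun s : ℝ => s / (1 + s ^ 2))
        ((1 * (1 + s ^ 2) - s * (2 * s)) / (1 + s ^ 2) ^ 2) s := by
      have hb : HasDerivAt (fun s : ℝ => 1 + s ^ 2) (2 * s) s := by
        simpa using (hasDerivAt_pow 2 s).const_add 1
      exact (hasDerivAt_id s).div hb (by positivity)
    simpa [one_mul] using (Real.hasDerivAt_arctan s).fun_sub h1
  have hmono : StrictMonoOn f (Set.Ici 0) := by
    apply strictMonoOn_of_deriv_pos (convex_Ici 0)
    · exact (Continuous.sub Real.continuous_arctan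
        (continuous_id.div (by continuity) (fun s => by positivity))).continuousOn
    · intro s hs
      rw [interior_Ici] at hs
      rw [(hde s).deriv]
      have h2 : (0:ℝ) < 1 + s ^ 2 := by positivity
      rw [div_sub_div _ _ (ne_of_gt h2) (by positivity), div_pos_iff]
      have hs0 : 0 < s := hs
      left
      constructor
      · nlinarith [mul_pos h2 (mul_pos hs0 hs0)]
      · positivity
  have := hmono (Set.self_mem_Ici) (Set.mem_Ici.mpr ht.le) ht
  simpa [hf, Real.arctan_zero] using this

lemma hfun_antiOn : StrictAntiOn hfun (Set.Ici 0) := by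
  have key : StrictAntiOn (fun x : ℝ => x * Real.arctan (2 * x) / Real.pi - x / 2)
      (Set.Ici 0) := by
    apply strictAntiOn_of_deriv_neg (convex_Ici 0)
    · apply Continuous.continuousOn
      continuity
    · intro x hx
      rw [interior_Ici] at hx
      have hpi := Real.pi_pos
      have hat : HasDerivAt (fun x : ℝ => Real.arctan (2 * x))
          (1 / (1 + (2 * x) ^ 2) * 2) x :=
        (Real.hasDerivAt_arctan (2 * x)).comp x (by simpa using (hasDerivAt_id x).const_mul 2)
      have hd : HasDerivAt (fun x : ℝ => x * Real.arctan (2 * x) / Real.pi - x / 2)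
          ((1 * Real.arctan (2 * x) + x * (1 / (1 + (2 * x) ^ 2) * 2)) / Real.pi - 1 / 2) x := by
        have := ((hasDerivAt_id x).mul hat).div_const Real.pi
        simpa using this.fun_sub ((hasDerivAt_id x).div_const 2)
      rw [hd.deriv]
      -- need arctan (2x) + 2x/(1+4x²) < π/2
      have hx0 : 0 < x := hx
      have hx' : x ≠ 0 := ne_of_gt hx0
      have ht : (0:ℝ) < (2 * x)⁻¹ := by positivity
      have h1 := arctan_gt _ ht
      have h2 : Real.arctan (2 * x)⁻¹ = Real.pi / 2 - Real.arctan (2 * x) :=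
        Real.arctan_inv_of_pos (by linarith)
      have h3 : (2 * x)⁻¹ / (1 + ((2 * x)⁻¹) ^ 2) = 2 * x / (1 + (2 * x) ^ 2) := by
        rw [div_eq_div_iff (by positivity) (by positivity)]
        field_simp
        ring
      rw [h2, h3] at h1
      rw [sub_neg, div_lt_iff₀ hpi]
      have h4 : x * (1 / (1 + (2 * x) ^ 2) * 2) = 2 * x / (1 + (2 * x) ^ 2) := by ring
      linarith
  intro a ha b hb hab
  rw [hfun_eq, hfun_eq, abs_of_nonneg (Set.mem_Ici.mp ha), abs_of_nonneg (Set.mem_Ici.mp hb)]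
  exact key ha hb hab

/-- `h` is strictly decreasing on `ℝ` (hence injective), and `h(0) = 0`. -/
theorem stmt19 : StrictAnti hfun ∧ Function.Injective hfun ∧ hfun 0 = 0 := by
  have h0 : hfun 0 = 0 := by simp [hfun]
  have hIic : StrictAntiOn hfun (Set.Iic 0) := by
    intro a ha b hb hab
    have ha' : a ≤ 0 := ha
    have hb' : b ≤ 0 := hb
    have : hfun (-a) < hfun (-b) :=
      hfun_antiOn (Set.mem_Ici.mpr (by linarith)) (Set.mem_Ici.mpr (by linarith)) (by linarith)
    rw [hfun_odd, hfun_odd] at this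
    linarith
  have hanti : StrictAnti hfun := hIic.Iic_union_Ici hfun_antiOn
  exact ⟨hanti, hanti.injective, h0⟩
end
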